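/- Let X^*, Y^* be simple filtered simplicial complexes with min(δ(X^*), δ(Y^*)) > r for some r ≥ 0, and suppose there is an (r/2)-interleaving (f, g) between them. Then g ∘ f = id_{X^*} and f ∘ g = id_{Y^*}; moreover the graph of f is a correspondence R with dis(R) ≤ max(deg(f), deg(g)), so 2 d_GH(X^*, Y^*) = d_I^F(X^*, Y^*). -/

import Mathlib

open Finset Function

noncomputable section
open scoped Classical

variable {V W U : Type} [Fintype V] [Fintype W] [Fintype U]

/-- A size function is monotone on nonempty subsets. -/
def Monot (D : Finset V → ℝ) : Prop :=
  ∀ ⦃α β : Finset V⦄, α.Nonempty → α ⊆ β → D α ≤ D β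

/-- `max 0 (sup over nonempty subsets of the vertex set of g)`. -/
def supSub (g : Finset V → ℝ) : ℝ :=
  ((Finset.univ : Finset V).powerset.filter Finset.Nonempty).fold max 0 g

/-- Degree of a morphism: least `r ≥ 0` with `D_Y (f α) ≤ D_X α + r` for all nonempty `α`. -/
def degF (DX : Finset V → ℝ) (DY : Finset W → ℝ) (f : V → W) : ℝ :=
  supSub fun α => DY (α.image f) - DX α

/-- Codegree: least `r ≥ 0` with `D_Y (f α ∪ g α) ≤ D_X α + r` for all nonempty `α`. -/
def codegF (DX : Finset V → ℝ) (DY : Finset W → ℝ) (f g : V → W) : ℝ :=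
  supSub fun α => DY (α.image f ∪ α.image g) - DX α

/-- `codeg^∞`: minimum over chains `f = F 0, …, F n = g` of the max codegree of
consecutive terms. -/
def codegInfF (DX : Finset V → ℝ) (DY : Finset W → ℝ) (f g : V → W) : ℝ :=
  sInf { c : ℝ | ∃ n : ℕ, 0 < n ∧ ∃ F : ℕ → V → W, F 0 = f ∧ F n = g ∧
    c = (Finset.range n).fold max 0 fun i => codegF DX DY (F i) (F (i + 1)) }

/-- `(f, g)` is an `ε`-interleaving between the filtered complexes given by `DX`, `DY`. -/
def IsInterleaving (DX : Finset V → ℝ) (DY : Finset W → ℝ)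
    (f : V → W) (g : W → V) (ε : ℝ) : Prop :=
  degF DX DY f ≤ ε ∧ degF DY DX g ≤ ε ∧
  codegInfF DX DX (g ∘ f) id ≤ 2 * ε ∧ codegInfF DY DY (f ∘ g) id ≤ 2 * ε

/-- The interleaving distance between filtered simplicial complexes. -/
def dIF (DX : Finset V → ℝ) (DY : Finset W → ℝ) : ℝ :=
  sInf { ε : ℝ | 0 ≤ ε ∧ ∃ f g, IsInterleaving DX DY f g ε }

/-- The vertex quasi-distance `δ_X(v,w)`. -/
def vqd (D : Finset V → ℝ) (v w : V) : ℝ :=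
  supSub fun α => D (insert w α) - D (insert v α)

/-- Distortion of a correspondence `R ⊆ V × W`, viewed as a tripod via the projections. -/
def corDis (DX : Finset V → ℝ) (DY : Finset W → ℝ) (R : Finset (V × W)) : ℝ :=
  (R.powerset.filter Finset.Nonempty).fold max 0 fun α =>
    |DX (α.image Prod.fst) - DY (α.image Prod.snd)|

/-- Gromov–Hausdorff distance (via correspondences). -/
def dGHcor (DX : Finset V → ℝ) (DY : Finset W → ℝ) : ℝ :=
  (1 / 2) * sInf { c : ℝ | ∃ R : Finset (V × W),
    (∀ v : V, ∃ w, (v, w) ∈ R) ∧ (∀ w : W, ∃ v, (v, w) ∈ R) ∧ c = corDis DX DY R }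

/-- Distortion of a tripod `(Z, p, q)`. -/
def trdis (DX : Finset V → ℝ) (DY : Finset W → ℝ) {Z : Type} [Fintype Z]
    (p : Z → V) (q : Z → W) : ℝ :=
  supSub fun α : Finset Z => |DX (α.image p) - DY (α.image q)|

/-- Gromov–Hausdorff distance between filtered simplicial complexes (via tripods). -/
def dGHtri (DX : Finset V → ℝ) (DY : Finset W → ℝ) : ℝ :=
  (1 / 2) * sInf { c : ℝ | ∃ (Z : Type) (_i : Fintype Z) (p : Z → V) (q : Z → W),
    Surjective p ∧ Surjective q ∧ c = trdis DX DY p q }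

/-- Diameter of a finite subset of a metric space. -/
def fdiam {M : Type} [MetricSpace M] (σ : Finset M) : ℝ :=
  (σ ×ˢ σ).fold max 0 fun p => dist p.1 p.2

/-- Metric distortion of a correspondence between metric spaces. -/
def metDis {M N : Type} [MetricSpace M] [MetricSpace N] (R : Finset (M × N)) : ℝ :=
  (R ×ˢ R).fold max 0 fun p => |dist p.1.1 p.2.1 - dist p.1.2 p.2.2|

/-- Gromov–Hausdorff distance between finite metric spaces. -/
def dGHmet (M N : Type) [MetricSpace M] [MetricSpace N] : ℝ :=
  (1 / 2) * sInf { c : ℝ | ∃ R : Finset (M × N),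
    (∀ x : M, ∃ y, (x, y) ∈ R) ∧ (∀ y : N, ∃ x, (x, y) ∈ R) ∧ c = metDis R }

set_option linter.unusedSectionVars false

/-! A vertex map `h : X → X` that moves some vertex `v` has, at the simplex `α ∪ {v}`,
codegree to the identity at least `δ_X(v, h v)`, by monotonicity of `D_X`.  In any chain
`h = F₀, …, Fₙ = id` some `Fⱼ ≠ id` is followed by `Fⱼ₊₁ = id`, so `codeg^∞(h, id) ≥ δ(X^*)`.
Hence the composites of an `(r/2)`-interleaving, whose `codeg^∞` to the identity is at most
`r < δ`, are identities.  The graph of `f` is then a correspondence whose distortion is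
controlled by `deg f` and `deg g`; conversely any correspondence `R` yields, through sections
of its projections, a `dis(R)`-interleaving.  Comparing infima gives `2 d_GH = d_I^F`. -/

lemma le_supSub (g : Finset V → ℝ) {α : Finset V} (hα : α.Nonempty) : g α ≤ supSub g :=
  (le_fold_max _).2 (Or.inr ⟨α, by simp [hα], le_rfl⟩)

lemma supSub_nonneg (g : Finset V → ℝ) : 0 ≤ supSub g :=
  (le_fold_max _).2 (Or.inl le_rfl)

lemma supSub_le {g : Finset V → ℝ} {M : ℝ} (hM : 0 ≤ M)
    (h : ∀ α : Finset V, α.Nonempty → g α ≤ M) : supSub g ≤ M :=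
  (fold_max_le _).2 ⟨hM, fun α hα => h α (mem_filter.1 hα).2⟩

section Degree

variable {DX : Finset V → ℝ} {DY : Finset W → ℝ}

lemma le_degF (f : V → W) {α : Finset V} (hα : α.Nonempty) :
    DY (α.image f) - DX α ≤ degF DX DY f :=
  le_supSub (fun α => DY (α.image f) - DX α) hα

lemma degF_nonneg (f : V → W) : 0 ≤ degF DX DY f :=
  supSub_nonneg _

lemma degF_le {f : V → W} {M : ℝ} (hM : 0 ≤ M)
    (h : ∀ α : Finset V, α.Nonempty → DY (α.image f) - DX α ≤ M) : degF DX DY f ≤ M :=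
  supSub_le hM h

lemma le_codegF (f g : V → W) {α : Finset V} (hα : α.Nonempty) :
    DY (α.image f ∪ α.image g) - DX α ≤ codegF DX DY f g :=
  le_supSub (fun α => DY (α.image f ∪ α.image g) - DX α) hα

lemma codegF_nonneg (f g : V → W) : 0 ≤ codegF DX DY f g :=
  supSub_nonneg _

lemma codegF_le {f g : V → W} {M : ℝ} (hM : 0 ≤ M)
    (h : ∀ α : Finset V, α.Nonempty → DY (α.image f ∪ α.image g) - DX α ≤ M) :
    codegF DX DY f g ≤ M :=
  supSub_le hM h

lemma codegInfF_le_codegF (f g : V → W) : codegInfF DX DY f g ≤ codegF DX DY f g := by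
  refine csInf_le ⟨0, ?_⟩ ⟨1, one_pos, fun i => if i = 0 then f else g, by simp, by simp, ?_⟩
  · rintro _ ⟨n, -, F, -, -, rfl⟩
    exact (le_fold_max _).2 (Or.inl le_rfl)
  · simp [max_eq_left (codegF_nonneg f g)]

end Degree

section Simple

variable {D : Finset V → ℝ}

lemma vqd_le_codegF_id (hD : Monot D) (h : V → V) (v : V) : vqd D v (h v) ≤ codegF D D h id := by
  refine supSub_le (codegF_nonneg h id) fun α _ => ?_
  have hsub : insert (h v) α ⊆ (insert v α).image h ∪ (insert v α).image id := by
    intro x hx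
    rcases mem_insert.1 hx with rfl | hx
    · exact mem_union_left _ (mem_image_of_mem h (mem_insert_self v α))
    · exact mem_union_right _ (by simpa using mem_insert_of_mem hx)
  linarith [hD (insert_nonempty _ _) hsub, le_codegF (DX := D) (DY := D) h id (insert_nonempty v α)]

lemma le_codegInfF_id (hD : Monot D) {δ : ℝ} (hδ : ∀ v w, v ≠ w → δ ≤ vqd D v w)
    {h : V → V} (hh : h ≠ id) : δ ≤ codegInfF D D h id := by
  refine le_csInf ⟨_, 1, one_pos, fun i => if i = 0 then h else id, by simp, by simp, rfl⟩ ?_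
  rintro _ ⟨n, hn, F, hF0, hFn, rfl⟩
  -- `j + 1` is the first index with `F (j + 1) = id`; the disjunct `n ≤ k` forces `j < n`
  obtain ⟨j, hj, hj1⟩ := Nat.exists_not_and_succ_of_not_zero_of_exists
    (p := fun k => F k = id ∨ n ≤ k) (by simp [hF0, hh, hn.ne']) ⟨n, Or.inr le_rfl⟩
  simp only [not_or, not_le] at hj
  have hFj1 : F (j + 1) = id := hj1.elim id fun hle => by rwa [show j + 1 = n by omega]
  obtain ⟨v, hv⟩ := Function.ne_iff.1 hj.1
  calc δ ≤ vqd D v (F j v) := hδ _ _ (Ne.symm hv)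
    _ ≤ codegF D D (F j) (F (j + 1)) := hFj1 ▸ vqd_le_codegF_id hD (F j) v
    _ ≤ _ := (le_fold_max _).2 (Or.inr ⟨j, mem_range.2 hj.2, le_rfl⟩)

lemma exists_lt_forall_le_vqd {r : ℝ} (hD : ∀ v w, v ≠ w → r < vqd D v w) :
    ∃ δ, r < δ ∧ ∀ v w, v ≠ w → δ ≤ vqd D v w := by
  rcases (univ : Finset V).offDiag.eq_empty_or_nonempty with h | h
  · refine ⟨r + 1, by linarith, fun v w hvw => absurd ?_ (eq_empty_iff_forall_notMem.1 h (v, w))⟩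
    simpa using hvw
  · obtain ⟨p, hp, hmin⟩ := exists_min_image _ (fun p : V × V => vqd D p.1 p.2) h
    exact ⟨_, hD _ _ (mem_offDiag.1 hp).2.2, fun v w hvw => hmin (v, w) (by simpa using hvw)⟩

lemma eq_id_of_codegInfF_id_le (hD : Monot D) {r : ℝ} (hDs : ∀ v w, v ≠ w → r < vqd D v w)
    {h : V → V} (hh : codegInfF D D h id ≤ r) : h = id := by
  by_contra hne
  obtain ⟨δ, hrδ, hδ⟩ := exists_lt_forall_le_vqd hDs
  linarith [le_codegInfF_id hD hδ hne]

end Simple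

namespace IsInterleaving

variable {DX : Finset V → ℝ} {DY : Finset W → ℝ} {f : V → W} {g : W → V} {ε : ℝ}

lemma symm (h : IsInterleaving DX DY f g ε) : IsInterleaving DY DX g f ε :=
  ⟨h.2.1, h.1, h.2.2.2, h.2.2.1⟩

lemma mono (h : IsInterleaving DX DY f g ε) {ε' : ℝ} (hε : ε ≤ ε') :
    IsInterleaving DX DY f g ε' :=
  ⟨h.1.trans hε, h.2.1.trans hε, h.2.2.1.trans (by linarith), h.2.2.2.trans (by linarith)⟩

lemma nonneg (h : IsInterleaving DX DY f g ε) : 0 ≤ ε :=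
  (degF_nonneg f).trans h.1

lemma comp_eq_id (hX : Monot DX) {r : ℝ} (hXs : ∀ v w, v ≠ w → r < vqd DX v w)
    (h : IsInterleaving DX DY f g (r / 2)) : g ∘ f = id :=
  eq_id_of_codegInfF_id_le hX hXs (by linarith [h.2.2.1])

end IsInterleaving

section Correspondence

variable {DX : Finset V → ℝ} {DY : Finset W → ℝ} {R : Finset (V × W)}

lemma corDis_nonneg : 0 ≤ corDis DX DY R :=
  (le_fold_max _).2 (Or.inl le_rfl)

lemma abs_sub_le_corDis {α : Finset (V × W)} (hαR : α ⊆ R) (hα : α.Nonempty) :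
    |DX (α.image Prod.fst) - DY (α.image Prod.snd)| ≤ corDis DX DY R :=
  (le_fold_max _).2 (Or.inr ⟨α, by simp [hαR, hα], le_rfl⟩)

lemma corDis_image_swap_le : corDis DY DX (R.image Prod.swap) ≤ corDis DX DY R := by
  refine (fold_max_le _).2 ⟨corDis_nonneg, fun α hα => ?_⟩
  simp only [mem_filter, mem_powerset] at hα
  have hsub : α.image Prod.swap ⊆ R :=
    calc α.image Prod.swap ⊆ (R.image Prod.swap).image Prod.swap := image_subset_image hα.1
      _ = R := by simp [image_image]
  have := abs_sub_le_corDis (DX := DX) (DY := DY) hsub (hα.2.image _)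
  rwa [image_image, image_image, abs_sub_comm] at this

lemma corDis_graph_le {f : V → W} {g : W → V} (hgf : g ∘ f = id) :
    corDis DX DY (univ.image fun v => (v, f v)) ≤ max (degF DX DY f) (degF DY DX g) := by
  refine (fold_max_le _).2 ⟨le_max_of_le_left (degF_nonneg f), fun α hα => ?_⟩
  simp only [mem_filter, mem_powerset] at hα
  have hsnd : α.image Prod.snd = (α.image Prod.fst).image f := by
    rw [image_image]
    refine image_congr fun p hp => ?_
    obtain ⟨v, -, rfl⟩ := mem_image.1 (hα.1 hp)
    rfl
  have hfst := hα.2.image Prod.fst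
  have hback := le_degF (DX := DY) (DY := DX) g (hfst.image f)
  rw [image_image, hgf, image_id] at hback
  rw [hsnd, abs_sub_le_iff]
  exact ⟨le_max_of_le_right hback, le_max_of_le_left (le_degF f hfst)⟩

variable {f : V → W} {g : W → V}

lemma abs_sub_image_le_corDis (hfR : ∀ v, (v, f v) ∈ R) {β : Finset V} (hβ : β.Nonempty) :
    |DX β - DY (β.image f)| ≤ corDis DX DY R := by
  have := abs_sub_le_corDis (DX := DX) (DY := DY)
    (α := β.image fun v => (v, f v)) (by simpa [image_subset_iff] using fun v _ => hfR v)
    (hβ.image _)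
  simpa [image_image, Function.comp_def] using this

lemma degF_le_corDis (hfR : ∀ v, (v, f v) ∈ R) : degF DX DY f ≤ corDis DX DY R :=
  degF_le corDis_nonneg fun _ hβ => by
    linarith [(abs_sub_le_iff.1 (abs_sub_image_le_corDis (DX := DX) (DY := DY) hfR hβ)).2]

lemma codegF_comp_id_le_corDis (hfR : ∀ v, (v, f v) ∈ R) (hgR : ∀ w, (g w, w) ∈ R) :
    codegF DX DX (g ∘ f) id ≤ 2 * corDis DX DY R := by
  refine codegF_le (by linarith [corDis_nonneg (DX := DX) (DY := DY) (R := R)]) fun β hβ => ?_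
  -- the pairs `(v, f v)` and `(g (f v), f v)` of `R` share their second coordinate
  set α := β.image (fun v => (v, f v)) ∪ β.image (fun v => (g (f v), f v))
  have hαR : α ⊆ R := by
    simpa [α, union_subset_iff, image_subset_iff] using ⟨fun v _ => hfR v, fun v _ => hgR (f v)⟩
  have hα := abs_sub_le_corDis (DX := DX) (DY := DY) hαR ((hβ.image _).mono subset_union_left)
  have hfst : α.image Prod.fst = β.image (g ∘ f) ∪ β.image id := by
    simp [α, image_union, image_image, Function.comp_def, union_comm]
  have hsnd : α.image Prod.snd = β.image f := by
    simp [α, image_union, image_image, Function.comp_def]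
  rw [hfst, hsnd] at hα
  linarith [(abs_sub_le_iff.1 hα).1, (abs_sub_le_iff.1 (abs_sub_image_le_corDis (DX := DX) (DY := DY) hfR hβ)).2]

lemma exists_isInterleaving_corDis (hR₁ : ∀ v, ∃ w, (v, w) ∈ R) (hR₂ : ∀ w, ∃ v, (v, w) ∈ R) :
    ∃ f g, IsInterleaving DX DY f g (corDis DX DY R) := by
  choose f hf using hR₁
  choose g hg using hR₂
  have hg' : ∀ w, (w, g w) ∈ R.image Prod.swap := fun w => mem_image_of_mem _ (hg w)
  have hf' : ∀ v, (f v, v) ∈ R.image Prod.swap := fun v => mem_image_of_mem _ (hf v)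
  have hswap := corDis_image_swap_le (DX := DX) (DY := DY) (R := R)
  refine ⟨f, g, degF_le_corDis hf, (degF_le_corDis hg').trans hswap,
    (codegInfF_le_codegF _ _).trans (codegF_comp_id_le_corDis hf hg),
    (codegInfF_le_codegF _ _).trans ?_⟩
  linarith [codegF_comp_id_le_corDis (DX := DY) (DY := DX) hg' hf']

lemma two_mul_dGHcor : 2 * dGHcor DX DY = sInf { c : ℝ | ∃ R : Finset (V × W),
    (∀ v : V, ∃ w, (v, w) ∈ R) ∧ (∀ w : W, ∃ v, (v, w) ∈ R) ∧ c = corDis DX DY R } := by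
  rw [dGHcor, ← mul_assoc, show (2 : ℝ) * (1 / 2) = 1 by norm_num, one_mul]

lemma two_mul_dGHcor_le_corDis (hR₁ : ∀ v, ∃ w, (v, w) ∈ R) (hR₂ : ∀ w, ∃ v, (v, w) ∈ R) :
    2 * dGHcor DX DY ≤ corDis DX DY R := by
  rw [two_mul_dGHcor]
  exact csInf_le ⟨0, by rintro _ ⟨R', -, -, rfl⟩; exact corDis_nonneg⟩ ⟨R, hR₁, hR₂, rfl⟩

lemma dIF_le_corDis (hR₁ : ∀ v, ∃ w, (v, w) ∈ R) (hR₂ : ∀ w, ∃ v, (v, w) ∈ R) :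
    dIF DX DY ≤ corDis DX DY R :=
  let ⟨f, g, h⟩ := exists_isInterleaving_corDis hR₁ hR₂
  csInf_le ⟨0, fun _ hε => hε.1⟩ ⟨corDis_nonneg, f, g, h⟩

lemma dIF_le_two_mul_dGHcor (hR₁ : ∀ v, ∃ w, (v, w) ∈ R) (hR₂ : ∀ w, ∃ v, (v, w) ∈ R) :
    dIF DX DY ≤ 2 * dGHcor DX DY := by
  rw [two_mul_dGHcor]
  refine le_csInf ⟨_, R, hR₁, hR₂, rfl⟩ ?_
  rintro _ ⟨R', hR'₁, hR'₂, rfl⟩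
  exact dIF_le_corDis hR'₁ hR'₂

lemma exists_mem_graph_left (v : V) : ∃ w, (v, w) ∈ univ.image fun v => (v, f v) :=
  ⟨f v, mem_image_of_mem _ (mem_univ v)⟩

lemma exists_mem_graph_right (hf : Surjective f) (w : W) :
    ∃ v, (v, w) ∈ univ.image fun v => (v, f v) := by
  obtain ⟨v, rfl⟩ := hf w
  exact ⟨v, mem_image_of_mem _ (mem_univ v)⟩

lemma two_mul_dGHcor_le_of_isInterleaving (hX : Monot DX) (hY : Monot DY) {r : ℝ}
    (hXs : ∀ v w, v ≠ w → r < vqd DX v w) (hYs : ∀ v w, v ≠ w → r < vqd DY v w) {ε : ℝ}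
    (hε : ε ≤ r / 2) (h : IsInterleaving DX DY f g ε) : 2 * dGHcor DX DY ≤ ε := by
  have hgf := (h.mono hε).comp_eq_id hX hXs
  have hfg := (h.mono hε).symm.comp_eq_id hY hYs
  calc 2 * dGHcor DX DY
      ≤ corDis DX DY (univ.image fun v => (v, f v)) :=
        two_mul_dGHcor_le_corDis exists_mem_graph_left
          (exists_mem_graph_right (Function.LeftInverse.surjective (congrFun hfg)))
    _ ≤ max (degF DX DY f) (degF DY DX g) := corDis_graph_le hgf
    _ ≤ ε := max_le h.1 h.2.1

end Correspondence

theorem stmt_18_general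
    (DX : Finset V → ℝ) (DY : Finset W → ℝ) (hX : Monot DX) (hY : Monot DY)
    (r : ℝ)
    (hXs : ∀ v w : V, v ≠ w → r < vqd DX v w)
    (hYs : ∀ v w : W, v ≠ w → r < vqd DY v w)
    (f : V → W) (g : W → V) (hint : IsInterleaving DX DY f g (r / 2)) :
    g ∘ f = id ∧ f ∘ g = id ∧
    corDis DX DY ((Finset.univ : Finset V).image fun v => (v, f v)) ≤
      max (degF DX DY f) (degF DY DX g) ∧
    2 * dGHcor DX DY = dIF DX DY := by
  have hgf := hint.comp_eq_id hX hXs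
  have hfg := hint.symm.comp_eq_id hY hYs
  refine ⟨hgf, hfg, corDis_graph_le hgf, le_antisymm ?_ ?_⟩
  · refine le_csInf ⟨r / 2, hint.nonneg, f, g, hint⟩ ?_
    rintro ε ⟨-, f', g', hint'⟩
    rcases le_total ε (r / 2) with hε | hε
    · exact two_mul_dGHcor_le_of_isInterleaving hX hY hXs hYs hε hint'
    · exact (two_mul_dGHcor_le_of_isInterleaving hX hY hXs hYs le_rfl hint).trans hε
  · exact dIF_le_two_mul_dGHcor exists_mem_graph_left
      (exists_mem_graph_right (Function.LeftInverse.surjective (congrFun hfg)))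

/-- between simple filtered simplicial complexes with
`min(δ(X^*), δ(Y^*)) > r`, an `(r/2)`-interleaving `(f, g)` consists of mutually inverse
bijections, the graph of `f` is a correspondence of distortion at most
`max(deg f, deg g)`, and `2 d_GH = d_I^F`. -/
theorem stmt_18 [Nonempty V] [Nonempty W]
    (DX : Finset V → ℝ) (DY : Finset W → ℝ) (hX : Monot DX) (hY : Monot DY)
    (r : ℝ) (hr : 0 ≤ r)
    (hXs : ∀ v w : V, v ≠ w → r < vqd DX v w)
    (hYs : ∀ v w : W, v ≠ w → r < vqd DY v w)
    (f : V → W) (g : W → V) (hint : IsInterleaving DX DY f g (r / 2)) :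
    g ∘ f = id ∧ f ∘ g = id ∧
    corDis DX DY ((Finset.univ : Finset V).image fun v => (v, f v)) ≤
      max (degF DX DY f) (degF DY DX g) ∧
    2 * dGHcor DX DY = dIF DX DY :=
  stmt_18_general DX DY hX hY r hXs hYs f g hint
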